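/- arXiv:1305.2142 — 5 statements merged into one kernel-verified Lean document; each statement's English description precedes it below -/
import Mathlib

section
/- Let n ≥ 1, let C = (C_i^j(d)) be any collection of elements of ℚ_α indexed by integers d ≥ 1 and ordered pairs i ≠ j in {1,…,n}, and let η ∈ ℚ_α(x) be such that η(α_i) is well-defined and nonzero for every i. Suppose F, F′ ∈ H_α⟪ħ⟫[[q]] are such that: (a) for every i, the q⁰-coefficient of F(α_i,ħ,q) is a nonzero element of ℚ_α and every q^d-coefficient with d ≥ 1 lies in ℚ_α(ħ); (b) F′ is C-recursive; and (c) the pair (F,F′) satisfies the η-MPC. Then F′ = 0 if and only if F′ ≅ 0 (mod ħ⁻¹), i.e., if and only if for every i and every d ≥ 0 the coefficient of ħ^r in the q^d-coefficient of F′(α_i,ħ,q) vanishes for every r ≥ 0. -/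
/-!
Setting: `Kf n = ℚ(α₁,…,αₙ)` is the field of rational functions in `n` variables over `ℚ`,
`Lf n = ℚ_α⟪ħ⟫` is the algebra of Laurent series in `ħ⁻¹` (modeled as Laurent series in the
variable `t = ħ⁻¹`, so that the coefficient of `ħ^r` is the Hahn-series coefficient at `-r`).
An element `F ∈ H_α⟪ħ⟫[[q]]` is modeled by its `n` evaluations `F : Fin n → PowerSeries (Lf n)`
(by the Chinese remainder theorem, `H_α ≅ ∏ᵢ ℚ_α` via `x ↦ (αᵢ)ᵢ`, so this is faithful).
-/

open scoped Classical

noncomputable section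

namespace SQ

/-- The field `ℚ_α = ℚ(α₁,…,αₙ)`. -/
abbrev Kf (n : ℕ) : Type := FractionRing (MvPolynomial (Fin n) ℚ)

/-- The element `αᵢ ∈ ℚ_α`. -/
def alpha (n : ℕ) (i : Fin n) : Kf n :=
  algebraMap (MvPolynomial (Fin n) ℚ) (Kf n) (MvPolynomial.X i)

/-- `ℚ_α⟪ħ⟫`: Laurent series in `t = ħ⁻¹`. -/
abbrev Lf (n : ℕ) : Type := LaurentSeries (Kf n)

/-- `ħ = t⁻¹` where `t` is the Laurent-series variable. -/
def hbar (n : ℕ) : Lf n := HahnSeries.single (-1 : ℤ) 1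

/-- The substitution `ħ ↦ −ħ` on `ℚ_α⟪ħ⟫`. -/
def negH (n : ℕ) (x : Lf n) : Lf n :=
  ⟨fun a => (-1 : Kf n) ^ a * x.coeff a,
    x.isPWO_support'.mono fun a ha => by
      simp only [Function.mem_support] at ha ⊢
      exact fun h => ha (by rw [h, mul_zero])⟩

/-- `x ∈ ℚ_α⟪ħ⟫` lies in (the image of) `ℚ_α(ħ)`, i.e. `Q(ħ)·x = P(ħ)` for some polynomials
`P, Q` with `Q ≠ 0`. -/
def IsRatH (n : ℕ) (x : Lf n) : Prop :=
  ∃ P Q : Polynomial (Kf n), Q ≠ 0 ∧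
    Polynomial.aeval (hbar n) Q * x = Polynomial.aeval (hbar n) P

/-- `x ∈ ℚ_α⟪ħ⟫` is a rational function of `ħ`, regular at `ħ = c`, with value `v` there. -/
def RegEvalAt (n : ℕ) (x : Lf n) (c v : Kf n) : Prop :=
  ∃ P Q : Polynomial (Kf n), Polynomial.eval c Q ≠ 0 ∧
    Polynomial.aeval (hbar n) Q * x = Polynomial.aeval (hbar n) P ∧
    v = Polynomial.eval c P / Polynomial.eval c Q

/-- `x` is a rational function of `ħ` regular at `ħ = c`. -/
def RegAt (n : ℕ) (x : Lf n) (c : Kf n) : Prop := ∃ v : Kf n, RegEvalAt n x c v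

/-- `x` is a Laurent polynomial in `ħ`, i.e. an element of `ℚ_α[ħ,ħ⁻¹]`. -/
def IsLaurentPolyH (n : ℕ) (x : Lf n) : Prop := x.support.Finite

/-- `x` is a polynomial in `ħ`, i.e. an element of `ℚ_α[ħ]`. -/
def IsPolyH (n : ℕ) (x : Lf n) : Prop :=
  ∃ P : Polynomial (Kf n), x = Polynomial.aeval (hbar n) P

/-- Definition 5.1 (`C`-recursivity).  `C d i j` is the structure constant `C_i^j(d)`
(only the values with `d ≥ 1` and `j ≠ i` are used). -/
def CRecursive (n : ℕ) (C : ℕ → Fin n → Fin n → Kf n)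
    (F : Fin n → PowerSeries (Lf n)) : Prop :=
  ∀ dstar : ℕ,
    (∀ d : ℕ, 1 ≤ d → d ≤ dstar → ∀ i : Fin n,
        IsRatH n (PowerSeries.coeff (R := Lf n) (dstar - d) (F i))) →
    (∀ d : ℕ, 1 ≤ d → d < dstar → ∀ i j : Fin n, i ≠ j →
        RegAt n (PowerSeries.coeff (R := Lf n) d (F i))
          ((alpha n i - alpha n j) / (d : Kf n))) →
    ∀ i : Fin n, ∃ v : ℕ → Fin n → Kf n,
      (∀ d : ℕ, ∀ j : Fin n, 1 ≤ d → d ≤ dstar → j ≠ i →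
          RegEvalAt n (PowerSeries.coeff (R := Lf n) (dstar - d) (F j))
            ((alpha n j - alpha n i) / (d : Kf n)) (v d j)) ∧
      IsLaurentPolyH n
        (PowerSeries.coeff (R := Lf n) dstar (F i)
          - ∑ d ∈ Finset.Icc 1 dstar, ∑ j ∈ Finset.univ.erase i,
              algebraMap (Kf n) (Lf n) (C d i j)
                * (hbar n
                    - algebraMap (Kf n) (Lf n)
                        ((alpha n j - alpha n i) / (d : Kf n)))⁻¹
                * algebraMap (Kf n) (Lf n) (v d j))

/-- The coefficient of `z^a q^D` in
`Φ^η_{F,F′}(ħ,z,q) = ∑ᵢ (η(αᵢ) e^{αᵢ z} / ∏_{k≠i}(αᵢ−α_k)) F(αᵢ,ħ,q e^{ħz}) F′(αᵢ,−ħ,q)`.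
(Only the values `η(αᵢ)` of the rational function `η` enter the definition, so `η` is
represented by its tuple of values `eta : Fin n → Kf n`.) -/
def PhiCoeff (n : ℕ) (eta : Fin n → Kf n) (F F' : Fin n → PowerSeries (Lf n))
    (a D : ℕ) : Lf n :=
  ∑ i : Fin n, ∑ d ∈ Finset.range (D + 1), ∑ m ∈ Finset.range (a + 1),
    algebraMap (Kf n) (Lf n)
        (eta i / (∏ k ∈ Finset.univ.erase i, (alpha n i - alpha n k))
          * (alpha n i ^ m / (Nat.factorial m : Kf n))
          * ((d : Kf n) ^ (a - m) / (Nat.factorial (a - m) : Kf n)))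
      * hbar n ^ (a - m)
      * PowerSeries.coeff (R := Lf n) d (F i)
      * negH n (PowerSeries.coeff (R := Lf n) (D - d) (F' i))

/-- The η mutual polynomiality condition: every coefficient of `z^a q^D` of `Φ^η_{F,F′}`
is a polynomial in `ħ`. -/
def MPC (n : ℕ) (eta : Fin n → Kf n) (F F' : Fin n → PowerSeries (Lf n)) : Prop :=
  ∀ a D : ℕ, IsPolyH n (PhiCoeff n eta F F' a D)

/-!
Induct on the `q`-degree `D`. Once the coefficients of `q^d`, `d < D`, of `F′` vanish, the
coefficient of `z^a q^D` of `Φ^η_{F,F′}` collapses to `(1/a!) ∑ᵢ αᵢ^a wᵢ F′_D(αᵢ,−ħ)` with nonzero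
weights `wᵢ = η(αᵢ) F_0(αᵢ) / ∏_{k≠i}(αᵢ−α_k)`. As the `αᵢ` are distinct, inverting this
Vandermonde system shows that every `F′_D(αᵢ,−ħ)` is a polynomial in `ħ`; a polynomial in `ħ`
with no coefficient of `ħ^r`, `r ≥ 0`, is zero.
-/

/-- In `Lf n` these are the polynomials in `ħ = t⁻¹`. -/
def nonposSupported (Γ R V : Type*) [PartialOrder Γ] [Zero Γ] [Semiring R] [AddCommMonoid V]
    [Module R V] : Submodule R (HahnSeries Γ V) where
  carrier := {x | ∀ a : Γ, 0 < a → x.coeff a = 0}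
  add_mem' hx hy a ha := by rw [HahnSeries.coeff_add, hx a ha, hy a ha, add_zero]
  zero_mem' _ _ := HahnSeries.coeff_zero
  smul_mem' c x hx a ha := by rw [HahnSeries.coeff_smul, hx a ha, smul_zero]

theorem Submodule.sum_eval_smul_mem {K M ι : Type*} [CommRing K] [AddCommGroup M] [Module K M]
    [Fintype ι] (S : Submodule K M) (x : ι → K) (z : ι → M)
    (h : ∀ a : ℕ, ∑ j, x j ^ a • z j ∈ S) (p : Polynomial K) :
    ∑ j, p.eval (x j) • z j ∈ S := by
  have hsum : ∑ j, p.eval (x j) • z j =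
      ∑ k ∈ Finset.range (p.natDegree + 1), p.coeff k • ∑ j, x j ^ k • z j := by
    simp only [Polynomial.eval_eq_sum_range, Finset.sum_smul, Finset.smul_sum, smul_smul]
    exact Finset.sum_comm
  rw [hsum]
  exact S.sum_mem fun k _ => S.smul_mem _ (h k)

theorem Submodule.mem_of_forall_sum_pow_smul_mem {K M ι : Type*} [Field K] [AddCommGroup M]
    [Module K M] [Fintype ι] [DecidableEq ι] (S : Submodule K M) {x : ι → K}
    (hx : Function.Injective x) (z : ι → M) (h : ∀ a : ℕ, ∑ j, x j ^ a • z j ∈ S) (i : ι) :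
    z i ∈ S := by
  have hbasis : ∑ j, (Lagrange.basis Finset.univ x i).eval (x j) • z j = z i := by
    rw [Finset.sum_eq_single i
      (fun j _ hji => by rw [Lagrange.eval_basis_of_ne (Ne.symm hji) (Finset.mem_univ j),
        zero_smul])
      (fun hi => absurd (Finset.mem_univ i) hi),
      Lagrange.eval_basis_self hx.injOn (Finset.mem_univ i), one_smul]
  rw [← hbasis]
  exact Submodule.sum_eval_smul_mem S x z h _

theorem alpha_injective (n : ℕ) : Function.Injective (alpha n) := fun _ _ h =>
  MvPolynomial.X_injective (IsFractionRing.injective (MvPolynomial (Fin n) ℚ) (Kf n) h)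

theorem prod_erase_alpha_sub_ne_zero (n : ℕ) (i : Fin n) :
    ∏ k ∈ Finset.univ.erase i, (alpha n i - alpha n k) ≠ 0 :=
  Finset.prod_ne_zero_iff.mpr fun _ hk =>
    sub_ne_zero.mpr fun h => (Finset.mem_erase.mp hk).1 (alpha_injective n h).symm

theorem negH_zero (n : ℕ) : negH n 0 = 0 := by
  ext a
  exact mul_zero _

theorem algebraMap_eq_single (n : ℕ) (c : Kf n) :
    algebraMap (Kf n) (Lf n) c = HahnSeries.single (0 : ℤ) c := by
  rw [HahnSeries.algebraMap_apply', PowerSeries.algebraMap_apply, Algebra.algebraMap_self_apply,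
    HahnSeries.ofPowerSeries_C, HahnSeries.C_apply]

theorem algebraMap_mul_eq_smul (n : ℕ) (c : Kf n) (x : Lf n) :
    algebraMap (Kf n) (Lf n) c * x = c • x := by
  rw [algebraMap_eq_single, ← HahnSeries.C_apply, HahnSeries.C_mul_eq_smul]

theorem aeval_hbar_mem_nonposSupported (n : ℕ) (P : Polynomial (Kf n)) :
    Polynomial.aeval (hbar n) P ∈ nonposSupported ℤ (Kf n) (Kf n) := by
  induction P using Polynomial.induction_on' with
  | add p q hp hq =>
    rw [map_add]
    exact Submodule.add_mem _ hp hq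
  | monomial k c =>
    intro a ha
    rw [Polynomial.aeval_monomial, hbar, HahnSeries.single_pow, algebraMap_eq_single,
      HahnSeries.single_mul_single, HahnSeries.coeff_single_of_ne (by simp; omega)]

theorem mem_nonposSupported_of_isPolyH {n : ℕ} {x : Lf n} (hx : IsPolyH n x) :
    x ∈ nonposSupported ℤ (Kf n) (Kf n) := by
  obtain ⟨P, rfl⟩ := hx
  exact aeval_hbar_mem_nonposSupported n P

theorem eq_zero_of_negH_mem_nonposSupported {n : ℕ} {x : Lf n}
    (hx : negH n x ∈ nonposSupported ℤ (Kf n) (Kf n)) (hnonneg : ∀ r : ℕ, x.coeff (-r) = 0) :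
    x = 0 := by
  ext a
  rw [HahnSeries.coeff_zero]
  rcases le_or_gt a 0 with ha | ha
  · simpa [Int.toNat_of_nonneg (neg_nonneg.mpr ha)] using hnonneg (-a).toNat
  · exact (mul_eq_zero.mp (hx a ha)).resolve_left (zpow_ne_zero a (neg_ne_zero.mpr one_ne_zero))

/-- For `d > 0` the factor `F′_{D-d}` vanishes, and for `d = 0` the factor `e^{dħz}`
contributes `0^(a-m)`, so only the term `d = 0`, `m = a` survives. -/
theorem phiCoeff_eq_of_coeff_eq_zero (n : ℕ) (eta : Fin n → Kf n)
    (F F' : Fin n → PowerSeries (Lf n)) (c : Fin n → Kf n)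
    (hc : ∀ i, PowerSeries.coeff (R := Lf n) 0 (F i) = algebraMap (Kf n) (Lf n) (c i))
    (D : ℕ) (hlow : ∀ d < D, ∀ i, PowerSeries.coeff (R := Lf n) d (F' i) = 0) (a : ℕ) :
    PhiCoeff n eta F F' a D =
      ∑ i, (eta i / (∏ k ∈ Finset.univ.erase i, (alpha n i - alpha n k))
          * (alpha n i ^ a / (a.factorial : Kf n)) * c i) •
        negH n (PowerSeries.coeff (R := Lf n) D (F' i)) := by
  refine Finset.sum_congr rfl fun i _ => ?_
  rw [Finset.sum_eq_single 0
    (fun d hd hd0 => Finset.sum_eq_zero fun m _ => by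
      rw [hlow (D - d) (by simp only [Finset.mem_range] at hd; omega) i, negH_zero, mul_zero])
    (fun h => absurd (Finset.mem_range.mpr (Nat.succ_pos D)) h)]
  rw [Finset.sum_eq_single a
    (fun m hm hma => by
      rw [Nat.cast_zero, zero_pow (by simp only [Finset.mem_range] at hm; omega : a - m ≠ 0),
        zero_div, mul_zero, map_zero, zero_mul, zero_mul, zero_mul])
    (fun h => absurd (Finset.mem_range.mpr (Nat.lt_succ_self a)) h)]
  rw [Nat.sub_self, Nat.sub_zero, Nat.cast_zero, pow_zero, Nat.factorial_zero, Nat.cast_one,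
    div_one, mul_one, pow_zero, mul_one, hc i, ← map_mul, algebraMap_mul_eq_smul]

theorem statement0_general (n : ℕ)
    (eta : Fin n → Kf n) (heta : ∀ i : Fin n, eta i ≠ 0)
    (F F' : Fin n → PowerSeries (Lf n))
    (hF0 : ∀ i : Fin n, ∃ c : Kf n, c ≠ 0 ∧
        PowerSeries.coeff (R := Lf n) 0 (F i) = algebraMap (Kf n) (Lf n) c)
    (hmpc : MPC n eta F F') :
    (∀ i : Fin n, F' i = 0) ↔
      (∀ (i : Fin n) (d r : ℕ),
        (PowerSeries.coeff (R := Lf n) d (F' i)).coeff (-(r : ℤ)) = 0) := by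
  refine ⟨fun h i d r => by rw [h i, map_zero, HahnSeries.coeff_zero], fun h => ?_⟩
  choose c hc0 hc using hF0
  set w : Fin n → Kf n := fun i => eta i / (∏ k ∈ Finset.univ.erase i, (alpha n i - alpha n k))
    * c i with hw
  have hw0 (i : Fin n) : w i ≠ 0 :=
    mul_ne_zero (div_ne_zero (heta i) (prod_erase_alpha_sub_ne_zero n i)) (hc0 i)
  suffices hcoeff : ∀ D i, PowerSeries.coeff (R := Lf n) D (F' i) = 0 from
    fun i => PowerSeries.ext fun D => by rw [hcoeff D i, map_zero]
  intro D
  induction D using Nat.strong_induction_on with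
  | _ D IH =>
  have hsystem (a : ℕ) : ∑ i, alpha n i ^ a • (w i • negH n (PowerSeries.coeff D (F' i)))
      ∈ nonposSupported ℤ (Kf n) (Kf n) := by
    have hphi : (a.factorial : Kf n) • PhiCoeff n eta F F' a D
        = ∑ i, alpha n i ^ a • (w i • negH n (PowerSeries.coeff D (F' i))) := by
      rw [phiCoeff_eq_of_coeff_eq_zero n eta F F' c hc D IH a, Finset.smul_sum]
      refine Finset.sum_congr rfl fun i _ => ?_
      rw [smul_smul, smul_smul, hw]
      congr 1
      field_simp [Nat.factorial_ne_zero a]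
    exact hphi ▸ Submodule.smul_mem _ _ (mem_nonposSupported_of_isPolyH (hmpc a D))
  intro i
  exact eq_zero_of_negH_mem_nonposSupported ((Submodule.smul_mem_iff _ (hw0 i)).mp
    (Submodule.mem_of_forall_sum_pow_smul_mem _ (alpha_injective n) _ hsystem i)) (h i D)

/-- Proposition `uniqueness_prp`: if the `q⁰`-coefficient of each `F(αᵢ)` is a
nonzero constant and all higher `q`-coefficients are rational in `ħ`, `F′` is `C`-recursive, and
`(F,F′)` satisfies the `η`-MPC, then `F′ = 0` iff `F′ ≅ 0 (mod ħ⁻¹)`, i.e. iff all coefficients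
of `ħ^r q^d`, `r ≥ 0`, of every `F′(αᵢ)` vanish. -/
theorem statement0 (n : ℕ) (hn : 1 ≤ n)
    (C : ℕ → Fin n → Fin n → Kf n)
    (eta : Fin n → Kf n) (heta : ∀ i : Fin n, eta i ≠ 0)
    (F F' : Fin n → PowerSeries (Lf n))
    (hF0 : ∀ i : Fin n, ∃ c : Kf n, c ≠ 0 ∧
        PowerSeries.coeff (R := Lf n) 0 (F i) = algebraMap (Kf n) (Lf n) c)
    (hFd : ∀ i : Fin n, ∀ d : ℕ, 1 ≤ d →
        IsRatH n (PowerSeries.coeff (R := Lf n) d (F i)))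
    (hrec : CRecursive n C F')
    (hmpc : MPC n eta F F') :
    (∀ i : Fin n, F' i = 0) ↔
      (∀ (i : Fin n) (d r : ℕ),
        (PowerSeries.coeff (R := Lf n) d (F' i)).coeff (-(r : ℤ)) = 0) :=
  statement0_general n eta heta F F' hF0 hmpc

end SQ
end
end

section
/- Let n ≥ 1 and let η ∈ ℚ_α(x) be such that η(α_i) is well-defined and nonzero for every i. If F, F′ ∈ H_α⟪ħ⟫[[q]] satisfy F(α_i,ħ,q), F′(α_i,ħ,q) ∈ ℚ_α(ħ)[[q]] for every i ∈ {1,…,n}, then the pair (F,F′) satisfies the η-MPC if and only if the pair (F′,F) satisfies the η-MPC. -/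
/-!
Setting: `Kf n = ℚ(α₁,…,αₙ)` is the field of rational functions in `n` variables over `ℚ`,
`Lf n = ℚ_α⟪ħ⟫` is the algebra of Laurent series in `ħ⁻¹` (modeled as Laurent series in the
variable `t = ħ⁻¹`, so that the coefficient of `ħ^r` is the Hahn-series coefficient at `-r`).
An element `F ∈ H_α⟪ħ⟫[[q]]` is modeled by its `n` evaluations `F : Fin n → PowerSeries (Lf n)`
(by the Chinese remainder theorem, `H_α ≅ ∏ᵢ ℚ_α` via `x ↦ (αᵢ)ᵢ`, so this is faithful).
-/

open scoped Classical

noncomputable section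

namespace SQ

/-!
Substituting `ħ ↦ -ħ` and `q ↦ q e^{ħz}` in `Φ^η_{F,F′}` gives `Φ^η_{F′,F}`, because the twist
`e^{dħz}` carried by `F` is undone. On coefficients, the coefficient of `z^a q^D` in `Φ^η_{F′,F}`
is `∑ₘ (Dħ)^m/m!` times the coefficient of `z^{a-m} q^D` in `Φ^η_{F,F′}` with `ħ` replaced by `-ħ`,
and `ℚ_α[ħ]` is stable under `ħ ↦ -ħ`.
-/

instance (n : ℕ) : CharZero (Lf n) :=
  charZero_of_injective_algebraMap (algebraMap (Kf n) (Lf n)).injective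

theorem sum_range_pow_div_factorial_mul {K : Type*} [Field K] [CharZero K] (x y : K) (a : ℕ) :
    ∑ m ∈ Finset.range (a + 1), x ^ m / m.factorial * (y ^ (a - m) / (a - m).factorial)
      = (x + y) ^ a / a.factorial := by
  rw [add_pow, Finset.sum_div]
  refine Finset.sum_congr rfl fun m hm => ?_
  have hma : m ≤ a := Nat.lt_succ_iff.mp (Finset.mem_range.mp hm)
  rw [Nat.cast_choose K hma]
  have := a.factorial_ne_zero
  have := m.factorial_ne_zero
  have := (a - m).factorial_ne_zero
  field_simp

section negH

variable (n : ℕ)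

theorem negH_coeff (x : Lf n) (a : ℤ) : (negH n x).coeff a = (-1) ^ a * x.coeff a := rfl

theorem support_negH (x : Lf n) : (negH n x).support = x.support := by
  ext a
  simp [negH_coeff, zpow_ne_zero a (neg_ne_zero.mpr (one_ne_zero (α := Kf n)))]

def negHAlgHom : Lf n →ₐ[Kf n] Lf n where
  toFun := negH n
  map_one' := by
    ext a
    by_cases ha : a = 0 <;> simp [negH_coeff, HahnSeries.coeff_one, ha]
  map_mul' x y := by
    ext a
    have hanti : Finset.antidiagonal (negH n x).isPWO_support (negH n y).isPWO_support a
        = Finset.antidiagonal x.isPWO_support y.isPWO_support a := by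
      ext
      simp only [Finset.mem_antidiagonal, support_negH]
    rw [negH_coeff, HahnSeries.coeff_mul, HahnSeries.coeff_mul, hanti, Finset.mul_sum]
    refine Finset.sum_congr rfl fun ij hij => ?_
    rw [negH_coeff, negH_coeff, ← (Finset.mem_antidiagonal.mp hij).2.2,
      zpow_add₀ (neg_ne_zero.mpr one_ne_zero)]
    ring
  map_zero' := by ext a; simp [negH_coeff]
  map_add' x y := by ext a; simp [negH_coeff, mul_add]
  commutes' c := by
    ext a
    by_cases ha : a = 0 <;> simp [negH_coeff, HahnSeries.algebraMap_apply', ha]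

variable {n}

@[simp]
theorem negHAlgHom_apply (x : Lf n) : negHAlgHom n x = negH n x := rfl

@[simp]
theorem negH_hbar : negH n (hbar n) = -hbar n := by
  ext a
  by_cases ha : a = -1 <;> simp [negH_coeff, hbar, ha]

@[simp]
theorem negH_negH (x : Lf n) : negH n (negH n x) = x := by
  ext a
  simp [negH_coeff, ← mul_assoc, ← mul_zpow]

theorem isPolyH_iff_mem_range (x : Lf n) :
    IsPolyH n x ↔ x ∈ (Polynomial.aeval (R := Kf n) (hbar n)).range :=
  exists_congr fun _ => eq_comm

theorem IsPolyH.negH {x : Lf n} (hx : IsPolyH n x) : IsPolyH n (negH n x) := by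
  obtain ⟨P, rfl⟩ := hx
  refine ⟨P.comp (-Polynomial.X), ?_⟩
  rw [Polynomial.aeval_comp, map_neg, Polynomial.aeval_X, ← negH_hbar]
  exact (Polynomial.aeval_algHom_apply (negHAlgHom n) (hbar n) P).symm

end negH

section Phi

variable (n : ℕ) (eta : Fin n → Kf n) (F F' : Fin n → PowerSeries (Lf n))

def phiWeight (i : Fin n) : Kf n :=
  eta i / ∏ k ∈ Finset.univ.erase i, (alpha n i - alpha n k)

/-- The `z`-expansion of `e^{αᵢ z} e^{dħz}`, packed by the binomial theorem. -/
theorem phiCoeff_eq_sum_add_pow (a D : ℕ) :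
    PhiCoeff n eta F F' a D
      = ∑ i : Fin n, ∑ d ∈ Finset.range (D + 1),
          algebraMap (Kf n) (Lf n) (phiWeight n eta i)
            * ((algebraMap (Kf n) (Lf n) (alpha n i) + d * hbar n) ^ a / a.factorial)
            * PowerSeries.coeff d (F i) * negH n (PowerSeries.coeff (D - d) (F' i)) := by
  refine Finset.sum_congr rfl fun i _ => Finset.sum_congr rfl fun d _ => ?_
  rw [← sum_range_pow_div_factorial_mul, Finset.mul_sum, Finset.sum_mul, Finset.sum_mul]
  refine Finset.sum_congr rfl fun m _ => ?_
  simp only [phiWeight, map_mul, map_div₀, map_pow, map_natCast]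
  ring

theorem negH_phiCoeff (a D : ℕ) :
    negH n (PhiCoeff n eta F F' a D)
      = ∑ i : Fin n, ∑ d ∈ Finset.range (D + 1),
          algebraMap (Kf n) (Lf n) (phiWeight n eta i)
            * ((algebraMap (Kf n) (Lf n) (alpha n i) - d * hbar n) ^ a / a.factorial)
            * negH n (PowerSeries.coeff d (F i)) * PowerSeries.coeff (D - d) (F' i) := by
  rw [phiCoeff_eq_sum_add_pow, ← negHAlgHom_apply]
  simp only [map_sum, map_mul, map_div₀, map_pow, map_add, map_natCast, AlgHom.commutes,
    negHAlgHom_apply, negH_hbar, negH_negH]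
  refine Finset.sum_congr rfl fun i _ => Finset.sum_congr rfl fun d _ => ?_
  ring

theorem phiCoeff_swap (a D : ℕ) :
    PhiCoeff n eta F' F a D
      = ∑ m ∈ Finset.range (a + 1),
          ((D : Lf n) * hbar n) ^ m / m.factorial * negH n (PhiCoeff n eta F F' (a - m) D) := by
  simp_rw [negH_phiCoeff, phiCoeff_eq_sum_add_pow, Finset.mul_sum]
  conv_rhs => rw [Finset.sum_comm]
  refine Finset.sum_congr rfl fun i _ => ?_
  conv_rhs => rw [Finset.sum_comm]
  rw [← Finset.sum_range_reflect]
  refine Finset.sum_congr rfl fun d hd => ?_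
  have hdD : d ≤ D := Nat.lt_succ_iff.mp (Finset.mem_range.mp hd)
  have hshift : algebraMap (Kf n) (Lf n) (alpha n i) + ((D : Lf n) - d) * hbar n
      = D * hbar n + (algebraMap (Kf n) (Lf n) (alpha n i) - d * hbar n) := by ring
  rw [Nat.add_sub_cancel, Nat.sub_sub_self hdD, Nat.cast_sub hdD, hshift,
    ← sum_range_pow_div_factorial_mul, Finset.mul_sum, Finset.sum_mul, Finset.sum_mul]
  exact Finset.sum_congr rfl fun m _ => by ring

end Phi

theorem MPC.symm {n : ℕ} {eta : Fin n → Kf n} {F F' : Fin n → PowerSeries (Lf n)}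
    (h : MPC n eta F F') : MPC n eta F' F := by
  intro a D
  rw [isPolyH_iff_mem_range, phiCoeff_swap]
  refine Subalgebra.sum_mem _ fun m _ => Subalgebra.mul_mem _ ?_ ?_
  · have hD : (D : Lf n) = algebraMap (Kf n) (Lf n) D := (map_natCast _ D).symm
    have hfact : ((m.factorial : Lf n))⁻¹ = algebraMap (Kf n) (Lf n) (m.factorial : Kf n)⁻¹ := by
      rw [map_inv₀, map_natCast]
    have hbar_mem : hbar n ∈ (Polynomial.aeval (R := Kf n) (hbar n)).range :=
      ⟨Polynomial.X, Polynomial.aeval_X _⟩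
    rw [div_eq_mul_inv, hD, hfact]
    exact Subalgebra.mul_mem _ (Subalgebra.pow_mem _ (Subalgebra.mul_mem _
      (Subalgebra.algebraMap_mem _ _) hbar_mem) _) (Subalgebra.algebraMap_mem _ _)
  · exact (isPolyH_iff_mem_range _).mp (h (a - m) D).negH

theorem statement4_general (n : ℕ)
    (eta : Fin n → Kf n)
    (F F' : Fin n → PowerSeries (Lf n)) :
    MPC n eta F F' ↔ MPC n eta F' F :=
  ⟨MPC.symm, MPC.symm⟩

/-- if all `q`-coefficients of each `F(αᵢ,ħ,q)` and each `F′(αᵢ,ħ,q)` are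
rational functions of `ħ`, then `(F,F′)` satisfies the `η`-MPC iff `(F′,F)` does. -/
theorem statement4 (n : ℕ) (hn : 1 ≤ n)
    (eta : Fin n → Kf n) (heta : ∀ i : Fin n, eta i ≠ 0)
    (F F' : Fin n → PowerSeries (Lf n))
    (hF : ∀ (i : Fin n) (d : ℕ), IsRatH n (PowerSeries.coeff (R := Lf n) d (F i)))
    (hF' : ∀ (i : Fin n) (d : ℕ), IsRatH n (PowerSeries.coeff (R := Lf n) d (F' i))) :
    MPC n eta F F' ↔ MPC n eta F' F :=
  statement4_general n eta F F'

end SQ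
end
end

section
/- For all integers n ≥ 1, ν ≥ 0, r ≥ 0 and d ≥ 0, the coefficient of z^d in 𝓗^{(r)}_ν(z) is a homogeneous symmetric polynomial of degree r − νd in α_1,…,α_n; in particular, for ν ≥ 1 this coefficient vanishes whenever νd > r. -/
/-!
Setting: in `MvPolynomial (Fin n) ℚ`, `esymm` is the elementary symmetric polynomial `𝔰_r`,
and `psum` is the power sum `p_r`.  The polynomial `H = H^{(r+ν)} ∈ ℚ[y₁,…,y_{r+ν}]` is
characterized by the hypothesis that `p_{r+ν} = H(e₁,…,e_{r+ν})` holds in any number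
`N ≥ r+ν` of variables.  Below, `HcalCoeff n ν r d H` is the coefficient of `z^d` in
`𝓗^{(r)}_ν(z)`:
* for `ν = 0`, `r = 0`: `𝓗^{(0)}_0(z) = (1−z)⁻¹ = ∑_d z^d`, so the coefficient is `1`;
* for `ν = 0`, `r ≥ 1`: `𝓗^{(r)}_0(z) = (1/r)(d/dz)H^{(r)}(𝔰₁(1−z)⁻¹,…,𝔰_r(1−z)⁻¹)`, whose
  `z^d`-coefficient is `((d+1)/r)` times the `z^{d+1}`-coefficient of the substituted series,
  with `(1−z)⁻¹ = ∑_d z^d` the geometric power series;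
* for `ν ≥ 1`:
  `𝓗^{(r)}_ν(z) = (1/(r+ν))(d/dz)H^{(r+ν)}(𝔰₁,…,𝔰_{ν−1},𝔰_ν−(−1)^ν z,𝔰_{ν+1},…,𝔰_{r+ν})`,
  whose `z^d`-coefficient is `((d+1)/(r+ν))` times the `z^{d+1}`-coefficient of the
  substituted polynomial in `z`.
-/

noncomputable section

open MvPolynomial

namespace SQ

/-- The coefficient of `z^d` in `𝓗^{(r)}_ν(z)`, as an element of `ℚ[α₁,…,αₙ]`. -/
def HcalCoeff (n ν r d : ℕ) (H : MvPolynomial (Fin (r + ν)) ℚ) : MvPolynomial (Fin n) ℚ :=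
  if ν = 0 then
    (if r = 0 then 1
     else
       (((d + 1 : ℕ) : ℚ) / (r : ℚ)) •
         PowerSeries.coeff (R := MvPolynomial (Fin n) ℚ) (d + 1)
           (MvPolynomial.aeval
             (fun j : Fin (r + ν) =>
               PowerSeries.C (R := MvPolynomial (Fin n) ℚ) (esymm (Fin n) ℚ ((j : ℕ) + 1))
                 * PowerSeries.mk fun _ => (1 : MvPolynomial (Fin n) ℚ)) H))
  else
    (((d + 1 : ℕ) : ℚ) / ((r + ν : ℕ) : ℚ)) •
      Polynomial.coeff
        (MvPolynomial.aeval
          (fun j : Fin (r + ν) =>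
            if (j : ℕ) = ν - 1 then
              Polynomial.C (esymm (Fin n) ℚ ν)
                - Polynomial.C ((-1 : MvPolynomial (Fin n) ℚ) ^ ν) * Polynomial.X
            else Polynomial.C (esymm (Fin n) ℚ ((j : ℕ) + 1))) H)
        (d + 1)

end SQ

/-!
Give each `αᵢ` weight `1` and `z` weight `ν`. In `r + ν` variables the `eⱼ` are algebraically
independent and homogeneous of degree `j`, so comparing homogeneous components in
`p_{r+ν} = H(e₁, …, e_{r+ν})` shows that `H` is weighted homogeneous of degree `r + ν` when `yⱼ`
has weight `j`. Every argument substituted into `H` (`𝔰ⱼ`, `𝔰_ν − (−1)^ν z`, or `𝔰ⱼ (1 − z)⁻¹`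
when `ν = 0`) is symmetric of weight `j`, so the substituted series is symmetric of weight `r + ν`:
its `z^{d+1}`-coefficient is symmetric and homogeneous of degree `r + ν − ν(d + 1) = r − νd`,
and vanishes when this number is negative.
-/

namespace MvPolynomial

section Substitution

variable {σ R : Type*} [CommSemiring R]

theorem IsWeightedHomogeneous.aeval_mem_graded {A M : Type*} [CommSemiring A] [Algebra R A]
    [AddCommMonoid M] (𝒜 : M → Submodule R A) [SetLike.GradedMonoid 𝒜] {w : σ → M} {m : M}
    {p : MvPolynomial σ R} (hp : p.IsWeightedHomogeneous w m) {g : σ → A}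
    (hg : ∀ i, g i ∈ 𝒜 (w i)) :
    aeval g p ∈ 𝒜 m := by
  classical
  rw [p.as_sum, map_sum]
  refine Submodule.sum_mem _ fun t ht => ?_
  rw [aeval_monomial, ← Algebra.smul_def, ← hp (mem_support_iff.mp ht), Finsupp.weight_apply]
  exact Submodule.smul_mem _ _ (SetLike.prod_pow_mem_graded 𝒜 w g t fun i _ => hg i)

variable {τ : Type*} {w : σ → ℕ} {g : σ → MvPolynomial τ R}

theorem homogeneousComponent_aeval (hg : ∀ i, (g i).IsHomogeneous (w i)) (c : ℕ)
    (p : MvPolynomial σ R) :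
    homogeneousComponent c (aeval g p) = aeval g (weightedHomogeneousComponent w c p) := by
  classical
  induction p using MvPolynomial.induction_on' with
  | monomial t a =>
    have ht := isWeightedHomogeneous_monomial w t a rfl
    rw [homogeneousComponent_of_mem (ht.aeval_mem_graded (homogeneousSubmodule τ R) hg),
      weightedHomogeneousComponent_of_mem ht]
    split_ifs <;> simp
  | add p q hp hq => simp only [map_add, hp, hq]

theorem isWeightedHomogeneous_of_isHomogeneous_aeval (hg : ∀ i, (g i).IsHomogeneous (w i))
    (hinj : Function.Injective (aeval (R := R) g)) {p : MvPolynomial σ R} {m : ℕ}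
    (hp : (aeval g p).IsHomogeneous m) :
    p.IsWeightedHomogeneous w m := by
  have hcomp : ∀ c ≠ m, weightedHomogeneousComponent w c p = 0 := fun c hc => hinj <| by
    rw [← homogeneousComponent_aeval hg, homogeneousComponent_of_mem hp, if_neg hc, map_zero]
  intro t ht
  by_contra hne
  have h := coeff_weightedHomogeneousComponent (w := w) (Finsupp.weight w t) p t
  rw [if_pos rfl, hcomp _ hne, coeff_zero] at h
  exact ht h.symm

end Substitution

section SymmetricFunctions

variable (σ R : Type*) [CommSemiring R] [Fintype σ]

theorem isHomogeneous_esymm (k : ℕ) : (esymm σ R k).IsHomogeneous k :=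
  IsHomogeneous.sum _ _ _ fun s hs => by
    simpa [(Finset.mem_powersetCard.mp hs).2] using
      IsHomogeneous.prod s _ (fun _ => 1) fun i _ => isHomogeneous_X R i

theorem isHomogeneous_psum (k : ℕ) : (psum σ R k).IsHomogeneous k :=
  IsHomogeneous.sum _ _ _ fun i _ => by simpa using (isHomogeneous_X R i).pow k

theorem isWeightedHomogeneous_of_aeval_esymm_eq_psum {R : Type*} [CommRing R] {k : ℕ}
    {H : MvPolynomial (Fin k) R}
    (hH : aeval (fun j : Fin k => esymm (Fin k) R ((j : ℕ) + 1)) H = psum (Fin k) R k) :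
    H.IsWeightedHomogeneous (fun j : Fin k => (j : ℕ) + 1) k := by
  refine isWeightedHomogeneous_of_isHomogeneous_aeval (fun j => isHomogeneous_esymm _ _ _)
    (fun p q hpq => ?_) (hH ▸ isHomogeneous_psum _ _ k)
  exact esymmAlgHom_fin_injective R le_rfl (Subtype.ext (by simpa [esymmAlgHom_apply] using hpq))

end SymmetricFunctions

variable (σ R : Type*) [CommSemiring R]

def symmetricHomogeneousSubmodule (m : ℕ) : Submodule R (MvPolynomial σ R) :=
  homogeneousSubmodule σ R m ⊓ Subalgebra.toSubmodule (symmetricSubalgebra σ R)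

instance : SetLike.GradedMonoid (symmetricHomogeneousSubmodule σ R) where
  one_mem := ⟨isHomogeneous_one σ R, IsSymmetric.one⟩
  mul_mem _ _ _ _ ha hb := ⟨ha.1.mul hb.1, IsSymmetric.mul ha.2 hb.2⟩

/-- The symmetric series of weight `m` in `(MvPolynomial σ R)⟦z⟧`, where each variable of `σ` has
weight `1` and `z` has weight `ν`; the second clause covers the negative degrees that the truncated
`m - ν * k` cannot express. -/
def gradedSymmetricSeries (ν m : ℕ) : Submodule R (PowerSeries (MvPolynomial σ R)) where
  carrier := {F | ∀ k, PowerSeries.coeff k F ∈ symmetricHomogeneousSubmodule σ R (m - ν * k) ∧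
    (m < ν * k → PowerSeries.coeff k F = 0)}
  add_mem' hF hG k := ⟨add_mem (hF k).1 (hG k).1, fun h => by simp [(hF k).2 h, (hG k).2 h]⟩
  zero_mem' k := ⟨zero_mem _, fun _ => map_zero _⟩
  smul_mem' c F hF k :=
    ⟨by simpa using Submodule.smul_mem _ c (hF k).1, fun h => by simp [(hF k).2 h]⟩

instance (ν : ℕ) : SetLike.GradedMonoid (gradedSymmetricSeries σ R ν) where
  one_mem k := by
    rw [PowerSeries.coeff_one]
    split_ifs with hk
    · subst hk
      exact ⟨by simpa using SetLike.one_mem_graded (symmetricHomogeneousSubmodule σ R), by simp⟩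
    · exact ⟨zero_mem _, fun _ => rfl⟩
  mul_mem a b F G hF hG k := by
    have hterm : ∀ p ∈ Finset.HasAntidiagonal.antidiagonal k,
        PowerSeries.coeff p.1 F * PowerSeries.coeff p.2 G ∈
          symmetricHomogeneousSubmodule σ R (a + b - ν * k) ∧
        (a + b < ν * k → PowerSeries.coeff p.1 F * PowerSeries.coeff p.2 G = 0) := by
      rintro ⟨i, j⟩ hij
      rw [Finset.HasAntidiagonal.mem_antidiagonal] at hij
      have hνk : ν * k = ν * i + ν * j := by rw [← hij, mul_add]
      by_cases ha : a < ν * i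
      · rw [(hF i).2 ha, zero_mul]
        exact ⟨zero_mem _, fun _ => rfl⟩
      by_cases hb : b < ν * j
      · rw [(hG j).2 hb, mul_zero]
        exact ⟨zero_mem _, fun _ => rfl⟩
      refine ⟨?_, fun h => by omega⟩
      convert SetLike.mul_mem_graded (hF i).1 (hG j).1 using 2
      omega
    rw [PowerSeries.coeff_mul]
    exact ⟨Submodule.sum_mem _ fun p hp => (hterm p hp).1,
      fun h => Finset.sum_eq_zero fun p hp => (hterm p hp).2 h⟩

variable {σ R}

theorem esymm_mem_symmetricHomogeneousSubmodule [Fintype σ] (k : ℕ) :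
    esymm σ R k ∈ symmetricHomogeneousSubmodule σ R k :=
  ⟨isHomogeneous_esymm σ R k, esymm_isSymmetric σ R k⟩

theorem C_mem_gradedSymmetricSeries {ν m : ℕ} {p : MvPolynomial σ R}
    (hp : p ∈ symmetricHomogeneousSubmodule σ R m) :
    PowerSeries.C p ∈ gradedSymmetricSeries σ R ν m := fun k => by
  rw [PowerSeries.coeff_C]
  split_ifs with hk
  · subst hk
    simpa using hp
  · exact ⟨zero_mem _, fun _ => rfl⟩

theorem X_mem_gradedSymmetricSeries (ν : ℕ) :
    PowerSeries.X ∈ gradedSymmetricSeries σ R ν ν := fun k => by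
  rw [PowerSeries.coeff_X]
  split_ifs with hk
  · subst hk
    exact ⟨by simpa using SetLike.one_mem_graded (symmetricHomogeneousSubmodule σ R),
      fun h => by omega⟩
  · exact ⟨zero_mem _, fun _ => rfl⟩

theorem mk_one_mem_gradedSymmetricSeries :
    (PowerSeries.mk fun _ => 1) ∈ gradedSymmetricSeries σ R 0 0 := fun _ =>
  ⟨by simpa using SetLike.one_mem_graded (symmetricHomogeneousSubmodule σ R), fun h => by omega⟩

theorem C_esymm_sub_C_mul_X_mem_gradedSymmetricSeries {σ R : Type*} [CommRing R] [Fintype σ]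
    (ν : ℕ) :
    PowerSeries.C (esymm σ R ν) - PowerSeries.C ((-1) ^ ν) * PowerSeries.X ∈
      gradedSymmetricSeries σ R ν ν := by
  have hsign : (-1 : MvPolynomial σ R) ^ ν ∈ symmetricHomogeneousSubmodule σ R 0 := by
    simpa using SetLike.pow_mem_graded ν
      (neg_mem (SetLike.one_mem_graded (symmetricHomogeneousSubmodule σ R)))
  refine sub_mem (C_mem_gradedSymmetricSeries (esymm_mem_symmetricHomogeneousSubmodule ν)) ?_
  simpa using SetLike.mul_mem_graded (C_mem_gradedSymmetricSeries hsign)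
    (X_mem_gradedSymmetricSeries ν)

end MvPolynomial

theorem Polynomial.coe_aeval_mvPolynomial {σ R S : Type*} [CommSemiring R] [CommSemiring S]
    [Algebra R S] (f : σ → Polynomial S) (p : MvPolynomial σ R) :
    ((MvPolynomial.aeval f p : Polynomial S) : PowerSeries S)
      = MvPolynomial.aeval (fun i => (f i : PowerSeries S)) p := by
  rw [MvPolynomial.aeval_def, MvPolynomial.aeval_def, ← coeToPowerSeries.ringHom_apply,
    eval₂_comp_left]
  congr 1
  ext r
  simp [Polynomial.algebraMap_apply, PowerSeries.algebraMap_apply]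

namespace SQ

theorem exists_HcalCoeff_eq_smul_coeff (n ν r d : ℕ) (hrν : r + ν ≠ 0)
    {H : MvPolynomial (Fin (r + ν)) ℚ}
    (hH : H.IsWeightedHomogeneous (fun j : Fin (r + ν) => (j : ℕ) + 1) (r + ν)) :
    ∃ c : ℚ, ∃ F ∈ gradedSymmetricSeries (Fin n) ℚ ν (r + ν),
      HcalCoeff n ν r d H = c • PowerSeries.coeff (d + 1) F := by
  unfold HcalCoeff
  split_ifs with hν hr
  · omega
  · subst hν
    refine ⟨_, _, hH.aeval_mem_graded _ fun j => ?_, rfl⟩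
    simpa using SetLike.mul_mem_graded
      (C_mem_gradedSymmetricSeries (esymm_mem_symmetricHomogeneousSubmodule ((j : ℕ) + 1)))
      mk_one_mem_gradedSymmetricSeries
  · refine ⟨_, _, ?_, by rw [Polynomial.coeff_coe]⟩
    rw [Polynomial.coe_aeval_mvPolynomial]
    refine hH.aeval_mem_graded _ fun j => ?_
    split_ifs with hj
    · rw [show (j : ℕ) + 1 = ν by omega, Polynomial.coe_sub, Polynomial.coe_mul, Polynomial.coe_C,
        Polynomial.coe_C, Polynomial.coe_X]
      exact C_esymm_sub_C_mul_X_mem_gradedSymmetricSeries ν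
    · rw [Polynomial.coe_C]
      exact C_mem_gradedSymmetricSeries (esymm_mem_symmetricHomogeneousSubmodule _)

theorem statement8_general (n : ℕ) (ν r d : ℕ)
    (H : MvPolynomial (Fin (r + ν)) ℚ)
    (hH : 1 ≤ r + ν → ∀ N : ℕ, r + ν ≤ N →
        MvPolynomial.aeval (fun j : Fin (r + ν) => esymm (Fin N) ℚ ((j : ℕ) + 1)) H
          = psum (Fin N) ℚ (r + ν)) :
    (HcalCoeff n ν r d H).IsSymmetric ∧
    (ν * d ≤ r → (HcalCoeff n ν r d H).IsHomogeneous (r - ν * d)) ∧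
    (1 ≤ ν → r < ν * d → HcalCoeff n ν r d H = 0) := by
  rcases Nat.eq_zero_or_pos (r + ν) with hrν | hrν
  · obtain ⟨rfl, rfl⟩ : r = 0 ∧ ν = 0 := by omega
    simp only [HcalCoeff, if_true]
    exact ⟨IsSymmetric.one, fun _ => by simpa using isHomogeneous_one (Fin n) ℚ,
      fun h => absurd h (by omega)⟩
  obtain ⟨c, F, hF, hcoeff⟩ := exists_HcalCoeff_eq_smul_coeff n ν r d hrν.ne'
    (isWeightedHomogeneous_of_aeval_esymm_eq_psum (hH hrν (r + ν) le_rfl))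
  have hdeg : r + ν - ν * (d + 1) = r - ν * d := by rw [mul_add_one]; omega
  obtain ⟨hmem, hzero⟩ := hF (d + 1)
  obtain ⟨hhom, hsymm⟩ := (symmetricHomogeneousSubmodule (Fin n) ℚ _).smul_mem c hmem
  rw [hcoeff]
  refine ⟨hsymm, fun _ => hdeg ▸ hhom, fun _ hlt => ?_⟩
  rw [hzero (by rw [mul_add_one]; omega), smul_zero]

/-- the coefficient of `z^d` in `𝓗^{(r)}_ν(z)` is a homogeneous symmetric
polynomial of degree `r − νd` in `α₁,…,αₙ`; in particular, for `ν ≥ 1` it vanishes whenever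
`νd > r`. -/
theorem statement8 (n : ℕ) (hn : 1 ≤ n) (ν r d : ℕ)
    (H : MvPolynomial (Fin (r + ν)) ℚ)
    (hH : 1 ≤ r + ν → ∀ N : ℕ, r + ν ≤ N →
        MvPolynomial.aeval (fun j : Fin (r + ν) => esymm (Fin N) ℚ ((j : ℕ) + 1)) H
          = psum (Fin N) ℚ (r + ν)) :
    (HcalCoeff n ν r d H).IsSymmetric ∧
    (ν * d ≤ r → (HcalCoeff n ν r d H).IsHomogeneous (r - ν * d)) ∧
    (1 ≤ ν → r < ν * d → HcalCoeff n ν r d H = 0) :=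
  statement8_general n ν r d H hH

end SQ
end
end

section
/- For every integer s with 0 ≤ s < ℓ⁻(a), the power series İ_s(q) equals 1; and for every integer s with 0 ≤ s < ℓ⁺(a), the power series Ï_s(q) equals 1. -/
/-!
Setting: `Rw = ℚ(w)` is the field of rational functions of `w`, and power series in `q` over
`Rw` model `ℚ(w)[[q]]`.  The operator `𝔻H = H + (q/w)∂H/∂q` multiplies the `q^d`-coefficient
by `1 + d/w`, and `𝕄H = 𝔻(H/H(0,q))`, where `H(0,q)` is obtained by evaluating each
coefficient at `w = 0`.  The hypergeometric series `Ḟ`, `F̈`, `F` and the series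
`İ_s = (𝕄^s Ḟ)(0,q)`, `Ï_s = (𝕄^s F̈)(0,q)`, `I_s = (𝕄^s F)(0,q)` are as in the paper, for a
tuple `a : Fin l → ℤ` of nonzero integers with `∑ |a_k| = n` (the Calabi–Yau case).
-/

noncomputable section

namespace SQ

/-- `ℚ(w)`. -/
abbrev Rw : Type := RatFunc ℚ

/-- The variable `w`. -/
def w : Rw := RatFunc.X

/-- Evaluation of a rational function of `w` at `w = 0` (junk value if not regular there). -/
def ev0 (f : Rw) : ℚ := RatFunc.eval (RingHom.id ℚ) 0 f

/-- The operator `𝔻H = H + (q/w)·∂H/∂q` on `ℚ(w)[[q]]`: `(𝔻H)_d = (1 + d·w⁻¹)·H_d`. -/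
def DD (H : PowerSeries Rw) : PowerSeries Rw :=
  PowerSeries.mk fun d => (1 + (d : Rw) * w⁻¹) * PowerSeries.coeff (R := Rw) d H

/-- `H(0,q) ∈ ℚ[[q]] ⊂ ℚ(w)[[q]]`: each coefficient of `H` evaluated at `w = 0`. -/
def ev0Series (H : PowerSeries Rw) : PowerSeries Rw :=
  PowerSeries.mk fun d => algebraMap ℚ Rw (ev0 (PowerSeries.coeff (R := Rw) d H))

/-- `𝕄H = 𝔻(H / H(0,q))`. -/
def MM (H : PowerSeries Rw) : PowerSeries Rw := DD (H * (ev0Series H)⁻¹)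

/-- `ℓ⁺(a) = #{k : a_k > 0}`. -/
def ellPlus (l : ℕ) (a : Fin l → ℤ) : ℕ := (Finset.univ.filter fun k => 0 < a k).card

/-- `ℓ⁻(a) = #{k : a_k < 0}`. -/
def ellMinus (l : ℕ) (a : Fin l → ℤ) : ℕ := (Finset.univ.filter fun k => a k < 0).card

/-- `a^a = ∏_k a_k^{|a_k|}`. -/
def aPowA (l : ℕ) (a : Fin l → ℤ) : ℤ := ∏ k : Fin l, a k ^ (a k).natAbs

/-- The hypergeometric series `Ḟ(w,q)`. -/
def Fdot (l n : ℕ) (a : Fin l → ℤ) : PowerSeries Rw :=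
  PowerSeries.mk fun d =>
    (∏ k : Fin l,
        if 0 < a k then
          ∏ r ∈ Finset.range ((a k).toNat * d), ((a k : Rw) * w + ((r : Rw) + 1))
        else
          ∏ r ∈ Finset.range ((a k).natAbs * d), ((a k : Rw) * w - (r : Rw)))
      / ∏ r ∈ Finset.range d, ((w + ((r : Rw) + 1)) ^ n - w ^ n)

/-- The hypergeometric series `F̈(w,q)`. -/
def Fddot (l n : ℕ) (a : Fin l → ℤ) : PowerSeries Rw :=
  PowerSeries.mk fun d =>
    (∏ k : Fin l,
        if 0 < a k then
          ∏ r ∈ Finset.range ((a k).toNat * d), ((a k : Rw) * w + (r : Rw))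
        else
          ∏ r ∈ Finset.range ((a k).natAbs * d), ((a k : Rw) * w - ((r : Rw) + 1)))
      / ∏ r ∈ Finset.range d, ((w + ((r : Rw) + 1)) ^ n - w ^ n)

/-- The hypergeometric series `F(w,q)`. -/
def Fhat (l n : ℕ) (a : Fin l → ℤ) : PowerSeries Rw :=
  PowerSeries.mk fun d =>
    (∏ k : Fin l,
        if 0 < a k then
          ∏ r ∈ Finset.range ((a k).toNat * d), ((a k : Rw) * w + ((r : Rw) + 1))
        else
          ∏ r ∈ Finset.range ((a k).natAbs * d), ((a k : Rw) * w - ((r : Rw) + 1)))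
      / ∏ r ∈ Finset.range d, (w + ((r : Rw) + 1)) ^ (n : ℕ)

/-- `İ_s(q) = (𝕄^s Ḟ)(0,q) ∈ ℚ[[q]]`. -/
def Idot (l n : ℕ) (a : Fin l → ℤ) (s : ℕ) : PowerSeries ℚ :=
  PowerSeries.mk fun d => ev0 (PowerSeries.coeff (R := Rw) d (MM^[s] (Fdot l n a)))

/-- `Ï_s(q) = (𝕄^s F̈)(0,q) ∈ ℚ[[q]]`. -/
def Iddot (l n : ℕ) (a : Fin l → ℤ) (s : ℕ) : PowerSeries ℚ :=
  PowerSeries.mk fun d => ev0 (PowerSeries.coeff (R := Rw) d (MM^[s] (Fddot l n a)))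

/-- `I_s(q) = (𝕄^s F)(0,q) ∈ ℚ[[q]]`. -/
def Ihat (l n : ℕ) (a : Fin l → ℤ) (s : ℕ) : PowerSeries ℚ :=
  PowerSeries.mk fun d => ev0 (PowerSeries.coeff (R := Rw) d (MM^[s] (Fhat l n a)))

/-!
Let `𝒪 ⊂ ℚ(w)` be the ring of rational functions regular at `w = 0`. If `H` has constant term `1`
and all its other coefficients lie in `w^(m+1) 𝒪`, then `H(0,q) = 1`, so `𝕄H = 𝔻H`; since `𝔻`
multiplies the `q^d`-coefficient by `(w + d)/w`, the coefficients of `𝕄H` lie in `w^m 𝒪`.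
For `d ≥ 1` the `q^d`-coefficient of `Ḟ` contains the factor `a_k w` (the term `r = 0`) for every
`a_k < 0`, and its denominator takes the value `∏ (r + 1)^n ≠ 0` at `w = 0`; so `m = ℓ⁻(a)` works
for `Ḟ`, and likewise `m = ℓ⁺(a)` for `F̈`. After `s < m` steps the coefficients of positive degree
still vanish at `w = 0`.
-/

open Polynomial Finset

lemma algebraMap_ne_zero_of_eval_ne_zero {D : ℚ[X]} (hD : D.eval 0 ≠ 0) :
    algebraMap ℚ[X] Rw D ≠ 0 :=
  RatFunc.algebraMap_ne_zero (by rintro rfl; simp at hD)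

lemma ev0_algebraMap_div {Q D : ℚ[X]} (hD : D.eval 0 ≠ 0) :
    ev0 (algebraMap ℚ[X] Rw Q / algebraMap ℚ[X] Rw D) = Q.eval 0 / D.eval 0 := by
  set x : Rw := algebraMap ℚ[X] Rw Q / algebraMap ℚ[X] Rw D
  obtain ⟨c, hc⟩ : x.denom ∣ D := RatFunc.denom_div_dvd Q D
  have hden : x.denom.eval 0 ≠ 0 := fun h => hD (by rw [hc, eval_mul, h, zero_mul])
  have hcross : x.num * D = Q * x.denom := by
    apply RatFunc.algebraMap_injective ℚ
    have h := RatFunc.num_div_denom x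
    rw [div_eq_div_iff (RatFunc.algebraMap_ne_zero x.denom_ne_zero)
      (algebraMap_ne_zero_of_eval_ne_zero hD)] at h
    simpa only [map_mul] using h
  change x.num.eval 0 / x.denom.eval 0 = _
  rw [div_eq_div_iff hden hD]
  simpa only [eval_mul] using congrArg (eval 0) hcross

def regularAtZero : Subring Rw where
  carrier := {f | ∃ Q D : ℚ[X], D.eval 0 ≠ 0 ∧ f = algebraMap ℚ[X] Rw Q / algebraMap ℚ[X] Rw D}
  mul_mem' := by
    rintro _ _ ⟨Q₁, D₁, h₁, rfl⟩ ⟨Q₂, D₂, h₂, rfl⟩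
    exact ⟨Q₁ * Q₂, D₁ * D₂, by simp [h₁, h₂], by simp only [map_mul, div_mul_div_comm]⟩
  one_mem' := ⟨1, 1, by simp, by simp⟩
  add_mem' := by
    rintro _ _ ⟨Q₁, D₁, h₁, rfl⟩ ⟨Q₂, D₂, h₂, rfl⟩
    refine ⟨Q₁ * D₂ + D₁ * Q₂, D₁ * D₂, by simp [h₁, h₂], ?_⟩
    rw [div_add_div _ _ (algebraMap_ne_zero_of_eval_ne_zero h₁)
      (algebraMap_ne_zero_of_eval_ne_zero h₂)]
    simp only [map_add, map_mul]
  zero_mem' := ⟨0, 1, by simp, by simp⟩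
  neg_mem' := by
    rintro _ ⟨Q, D, h, rfl⟩
    exact ⟨-Q, D, h, by simp only [map_neg, neg_div]⟩

lemma w_mem_regularAtZero : w ∈ regularAtZero :=
  ⟨X, 1, by simp, by simp [RatFunc.algebraMap_X, w]⟩

lemma inv_algebraMap_mem_regularAtZero {D : ℚ[X]} (hD : D.eval 0 ≠ 0) :
    (algebraMap ℚ[X] Rw D)⁻¹ ∈ regularAtZero :=
  ⟨1, D, hD, by simp⟩

def VanishesToOrder (m : ℕ) (f : Rw) : Prop := ∃ g ∈ regularAtZero, f = w ^ m * g

lemma vanishesToOrder_zero {f : Rw} (hf : f ∈ regularAtZero) : VanishesToOrder 0 f :=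
  ⟨f, hf, by simp⟩

lemma VanishesToOrder.mul_right {m : ℕ} {f g : Rw} (hf : VanishesToOrder m f)
    (hg : g ∈ regularAtZero) : VanishesToOrder m (f * g) := by
  obtain ⟨f', hf', rfl⟩ := hf
  exact ⟨f' * g, mul_mem hf' hg, by ring⟩

lemma VanishesToOrder.prod {ι : Type*} {s : Finset ι} {e : ι → ℕ} {f : ι → Rw}
    (hf : ∀ i ∈ s, VanishesToOrder (e i) (f i)) :
    VanishesToOrder (∑ i ∈ s, e i) (∏ i ∈ s, f i) := by
  choose! g hg hfg using hf
  refine ⟨∏ i ∈ s, g i, prod_mem hg, ?_⟩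
  rw [← prod_pow_eq_pow_sum, ← prod_mul_distrib]
  exact prod_congr rfl hfg

lemma vanishesToOrder_one_prod_range {N : ℕ} (hN : 0 < N) {f : ℕ → Rw}
    (hf : ∀ r, f r ∈ regularAtZero) (c : ℤ) (hf0 : f 0 = c * w) :
    VanishesToOrder 1 (∏ r ∈ range N, f r) := by
  rw [← mul_prod_erase _ f (mem_range.mpr hN), hf0]
  exact ⟨c * ∏ r ∈ (range N).erase 0, f r, mul_mem (intCast_mem _ c) (prod_mem fun r _ => hf r),
    by ring⟩

lemma ev0_eq_zero_of_vanishesToOrder {m : ℕ} {f : Rw} (hf : VanishesToOrder (m + 1) f) :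
    ev0 f = 0 := by
  obtain ⟨_, ⟨Q, D, hD, rfl⟩, rfl⟩ := hf
  have hfrac : w ^ (m + 1) * (algebraMap ℚ[X] Rw Q / algebraMap ℚ[X] Rw D) =
      algebraMap ℚ[X] Rw (X ^ (m + 1) * Q) / algebraMap ℚ[X] Rw D := by
    rw [map_mul, map_pow, RatFunc.algebraMap_X, mul_div_assoc, w]
  rw [hfrac, ev0_algebraMap_div hD]
  simp

/-- `(1 + d/w) w^(m+1) g = w^m (w + d) g`: this is how `𝔻` lowers the order of vanishing. -/
lemma VanishesToOrder.one_add_mul_inv_mul {m : ℕ} {f : Rw} (hf : VanishesToOrder (m + 1) f)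
    (d : ℕ) : VanishesToOrder m ((1 + d * w⁻¹) * f) := by
  obtain ⟨g, hg, rfl⟩ := hf
  refine ⟨(w + d) * g, mul_mem (add_mem w_mem_regularAtZero (natCast_mem _ d)) hg, ?_⟩
  have hw : w ≠ 0 := RatFunc.X_ne_zero
  field_simp
  ring

def IsOneModWPow (m : ℕ) (H : PowerSeries Rw) : Prop :=
  PowerSeries.coeff 0 H = 1 ∧ ∀ d, 0 < d → VanishesToOrder m (PowerSeries.coeff d H)

namespace IsOneModWPow

variable {m : ℕ} {H : PowerSeries Rw}

lemma mk_ev0_coeff_eq_one (h : IsOneModWPow (m + 1) H) :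
    PowerSeries.mk (fun d => ev0 (PowerSeries.coeff d H)) = 1 := by
  ext d
  rcases Nat.eq_zero_or_pos d with rfl | hd
  · simp [h.1, ev0, RatFunc.eval_one]
  · simp [ev0_eq_zero_of_vanishesToOrder (h.2 d hd), PowerSeries.coeff_one, hd.ne']

lemma ev0Series_eq_one (h : IsOneModWPow (m + 1) H) : ev0Series H = 1 := by
  rw [← map_one (PowerSeries.map (algebraMap ℚ Rw)), ← h.mk_ev0_coeff_eq_one]
  ext d
  simp [ev0Series]

lemma MM (h : IsOneModWPow (m + 1) H) : IsOneModWPow m (MM H) := by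
  rw [SQ.MM, h.ev0Series_eq_one, inv_one, mul_one]
  exact ⟨by simp [DD, h.1], fun d hd => by
    simpa [DD] using (h.2 d hd).one_add_mul_inv_mul d⟩

lemma iterate_MM {s : ℕ} (h : IsOneModWPow (m + s) H) : IsOneModWPow m (SQ.MM^[s] H) := by
  induction s generalizing H with
  | zero => exact h
  | succ s ih => exact ih (IsOneModWPow.MM h)

lemma mk_ev0_coeff_iterate_MM_eq_one {s : ℕ} (h : IsOneModWPow m H) (hs : s < m) :
    PowerSeries.mk (fun d => ev0 (PowerSeries.coeff d (SQ.MM^[s] H))) = 1 := by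
  obtain ⟨k, rfl⟩ := Nat.exists_eq_add_of_lt hs
  exact (iterate_MM (m := k + 1) (by rwa [show s + k + 1 = k + 1 + s by omega] at h))
    |>.mk_ev0_coeff_eq_one

end IsOneModWPow

lemma inv_denominator_mem_regularAtZero {n : ℕ} (hn : 1 ≤ n) (d : ℕ) :
    (∏ r ∈ range d, ((w + ((r : Rw) + 1)) ^ n - w ^ n))⁻¹ ∈ regularAtZero := by
  have hD : (∏ r ∈ range d, ((X + ((r : ℚ[X]) + 1)) ^ n - X ^ n)).eval 0 ≠ 0 := by
    rw [eval_prod, prod_ne_zero_iff]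
    intro r _
    simp only [eval_sub, eval_pow, eval_add, eval_X, eval_natCast, eval_one, zero_add,
      zero_pow (by omega : n ≠ 0), sub_zero]
    positivity
  simpa [map_prod, RatFunc.algebraMap_X, w] using inv_algebraMap_mem_regularAtZero hD

lemma intCast_mul_w_mem_regularAtZero (c : ℤ) : (c : Rw) * w ∈ regularAtZero :=
  mul_mem (intCast_mem _ c) w_mem_regularAtZero

lemma isOneModWPow_Fdot {l n : ℕ} (hn : 1 ≤ n) (a : Fin l → ℤ) :
    IsOneModWPow (ellMinus l a) (Fdot l n a) := by
  refine ⟨by simp [Fdot], fun d hd => ?_⟩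
  simp only [Fdot, PowerSeries.coeff_mk, div_eq_mul_inv]
  refine VanishesToOrder.mul_right ?_ (inv_denominator_mem_regularAtZero hn d)
  have h := VanishesToOrder.prod (s := univ) (e := fun k => if a k < 0 then 1 else 0)
    (f := fun k => if 0 < a k
      then ∏ r ∈ range ((a k).toNat * d), ((a k : Rw) * w + ((r : Rw) + 1))
      else ∏ r ∈ range ((a k).natAbs * d), ((a k : Rw) * w - (r : Rw))) fun k _ => by
    split_ifs with hneg hpos hpos
    · omega
    · have : 0 < (a k).natAbs := by omega
      exact vanishesToOrder_one_prod_range (by positivity)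
        (fun r => sub_mem (intCast_mul_w_mem_regularAtZero _) (natCast_mem _ r)) (a k) (by simp)
    · exact vanishesToOrder_zero (prod_mem fun r _ =>
        add_mem (intCast_mul_w_mem_regularAtZero _) (add_mem (natCast_mem _ r) (one_mem _)))
    · exact vanishesToOrder_zero (prod_mem fun r _ =>
        sub_mem (intCast_mul_w_mem_regularAtZero _) (natCast_mem _ r))
  rwa [sum_boole, Nat.cast_id] at h

lemma isOneModWPow_Fddot {l n : ℕ} (hn : 1 ≤ n) (a : Fin l → ℤ) :
    IsOneModWPow (ellPlus l a) (Fddot l n a) := by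
  refine ⟨by simp [Fddot], fun d hd => ?_⟩
  simp only [Fddot, PowerSeries.coeff_mk, div_eq_mul_inv]
  refine VanishesToOrder.mul_right ?_ (inv_denominator_mem_regularAtZero hn d)
  have h := VanishesToOrder.prod (s := univ) (e := fun k => if 0 < a k then 1 else 0)
    (f := fun k => if 0 < a k
      then ∏ r ∈ range ((a k).toNat * d), ((a k : Rw) * w + (r : Rw))
      else ∏ r ∈ range ((a k).natAbs * d), ((a k : Rw) * w - ((r : Rw) + 1))) fun k _ => by
    split_ifs with hpos
    · have : 0 < (a k).toNat := by omega
      exact vanishesToOrder_one_prod_range (by positivity)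
        (fun r => add_mem (intCast_mul_w_mem_regularAtZero _) (natCast_mem _ r)) (a k) (by simp)
    · exact vanishesToOrder_zero (prod_mem fun r _ =>
        sub_mem (intCast_mul_w_mem_regularAtZero _) (add_mem (natCast_mem _ r) (one_mem _)))
  rwa [sum_boole, Nat.cast_id] at h

theorem statement10_general (l n : ℕ) (hn : 1 ≤ n) (a : Fin l → ℤ) :
    (∀ s : ℕ, s < ellMinus l a → Idot l n a s = 1) ∧
    (∀ s : ℕ, s < ellPlus l a → Iddot l n a s = 1) :=
  ⟨fun _ hs => (isOneModWPow_Fdot hn a).mk_ev0_coeff_iterate_MM_eq_one hs,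
    fun _ hs => (isOneModWPow_Fddot hn a).mk_ev0_coeff_iterate_MM_eq_one hs⟩

/-- `İ_s(q) = 1` for `0 ≤ s < ℓ⁻(a)` and `Ï_s(q) = 1` for `0 ≤ s < ℓ⁺(a)`. -/
theorem statement10 (l n : ℕ) (hn : 1 ≤ n) (a : Fin l → ℤ) (ha : ∀ k, a k ≠ 0)
    (hCY : ∑ k : Fin l, (a k).natAbs = n) :
    (∀ s : ℕ, s < ellMinus l a → Idot l n a s = 1) ∧
    (∀ s : ℕ, s < ellPlus l a → Iddot l n a s = 1) :=
  statement10_general l n hn a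

end SQ
end
end

section
/- İ_{ℓ⁻(a)}(q) = Ï_{ℓ⁺(a)}(q) = ∑_{d≥0} q^d · [∏_{a_k>0} (a_k d)! · ∏_{a_k<0} ((−1)^{|a_k| d}·(|a_k| d)!)] / (d!)^n as power series in ℚ[[q]]. -/
/-!
Setting: `Rw = ℚ(w)` is the field of rational functions of `w`, and power series in `q` over
`Rw` model `ℚ(w)[[q]]`.  The operator `𝔻H = H + (q/w)∂H/∂q` multiplies the `q^d`-coefficient
by `1 + d/w`, and `𝕄H = 𝔻(H/H(0,q))`, where `H(0,q)` is obtained by evaluating each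
coefficient at `w = 0`.  The hypergeometric series `Ḟ`, `F̈`, `F` and the series
`İ_s = (𝕄^s Ḟ)(0,q)`, `Ï_s = (𝕄^s F̈)(0,q)`, `I_s = (𝕄^s F)(0,q)` are as in the paper, for a
tuple `a : Fin l → ℤ` of nonzero integers with `∑ |a_k| = n` (the Calabi–Yau case).
-/

noncomputable section

namespace SQ

/-!
For `d > 0` the `q^d`-coefficient of `Ḟ` is `c_d·w^{ℓ⁻(a)} + O(w^{ℓ⁻(a)+1})` at `w = 0`: every
negative `a_k` contributes the factor `a_k w` (the `r = 0` factor of `∏ (a_k w − r)`), all other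
linear factors and the denominator `∏ ((w+r)ⁿ − wⁿ)` are units at `w = 0`.  As long as the higher
coefficients vanish at `w = 0`, `H(0,q) = 1`, so `𝕄` acts as `𝔻`, which multiplies the
`q^d`-coefficient by `(w + d)/w`: the order at `w = 0` drops by one and the leading coefficient
is multiplied by `d`.  After `ℓ⁻(a)` steps the value at `w = 0` is `d^{ℓ⁻(a)}·c_d`, the claimed
ratio of factorials.  For `F̈` the factors `a_k w` come from the positive `a_k` instead.
-/

open Polynomial

lemma ev0_algebraMap (p : ℚ[X]) : ev0 (algebraMap ℚ[X] Rw p) = p.eval 0 := by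
  simp [ev0, Polynomial.eval]

lemma ev0_algebraMap_div_s11 {p q : ℚ[X]} (hq : q.eval 0 ≠ 0) :
    ev0 (algebraMap ℚ[X] Rw p / algebraMap ℚ[X] Rw q) = p.eval 0 / q.eval 0 := by
  -- the reduced denominator of `p / q` divides `q`, so it does not vanish at `0` either
  have hden : (RatFunc.denom (algebraMap ℚ[X] Rw p / algebraMap ℚ[X] Rw q)).eval₂ (RingHom.id ℚ) 0
      ≠ 0 := by
    obtain ⟨t, ht⟩ := RatFunc.denom_div_dvd p q
    rw [Polynomial.eval₂_id]
    intro h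
    exact hq (by rw [ht, eval_mul, h, zero_mul])
  have hmul := RatFunc.eval_mul (RingHom.id ℚ) 0 hden
    (y := algebraMap ℚ[X] Rw q) (by simp [RatFunc.denom_algebraMap])
  rw [div_mul_cancel₀ _ (RatFunc.algebraMap_ne_zero (by rintro rfl; simp at hq))] at hmul
  change ev0 _ = ev0 _ * ev0 _ at hmul
  rw [ev0_algebraMap, ev0_algebraMap] at hmul
  rw [eq_div_iff hq, hmul]

/-- `HasLeadingTerm s c f`: `f = c·wˢ + O(wˢ⁺¹)` near `w = 0` (with `c = 0` allowed). -/
def HasLeadingTerm (s : ℕ) (c : ℚ) (f : Rw) : Prop :=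
  ∃ p q : ℚ[X], q.eval 0 ≠ 0 ∧ p.eval 0 / q.eval 0 = c ∧
    f = algebraMap ℚ[X] Rw (X ^ s * p) / algebraMap ℚ[X] Rw q

namespace HasLeadingTerm

variable {s t : ℕ} {c c' : ℚ} {f g : Rw}

lemma of_polynomial (s : ℕ) (p : ℚ[X]) :
    HasLeadingTerm s (p.eval 0) (algebraMap ℚ[X] Rw (X ^ s * p)) :=
  ⟨p, 1, by simp, by simp, by simp⟩

lemma one : HasLeadingTerm 0 1 1 := by
  simpa using of_polynomial 0 1

lemma mul (hf : HasLeadingTerm s c f) (hg : HasLeadingTerm t c' g) :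
    HasLeadingTerm (s + t) (c * c') (f * g) := by
  obtain ⟨p, q, hq, rfl, rfl⟩ := hf
  obtain ⟨p', q', hq', rfl, rfl⟩ := hg
  refine ⟨p * p', q * q', by simp [hq, hq'], by simp [div_mul_div_comm], ?_⟩
  simp only [map_mul, map_pow, pow_add]
  field_simp

lemma prod {ι : Type*} {S : Finset ι} {i : ι → ℕ} {c : ι → ℚ} {f : ι → Rw}
    (h : ∀ k ∈ S, HasLeadingTerm (i k) (c k) (f k)) :
    HasLeadingTerm (∑ k ∈ S, i k) (∏ k ∈ S, c k) (∏ k ∈ S, f k) := by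
  classical
  induction S using Finset.induction_on with
  | empty => simpa using one
  | insert k S hk ih =>
    rw [Finset.sum_insert hk, Finset.prod_insert hk, Finset.prod_insert hk]
    exact (h k (Finset.mem_insert_self k S)).mul
      (ih fun j hj => h j (Finset.mem_insert_of_mem hj))

lemma inv (hf : HasLeadingTerm 0 c f) (hc : c ≠ 0) : HasLeadingTerm 0 c⁻¹ f⁻¹ := by
  obtain ⟨p, q, hq, rfl, rfl⟩ := hf
  have hp : p.eval 0 ≠ 0 := fun h => hc (by simp [h])
  exact ⟨q, p, hp, by rw [inv_div], by simp⟩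

lemma one_add_pow_mul (hf : HasLeadingTerm (t + s) c f) (d : ℕ) :
    HasLeadingTerm s (d ^ t * c) ((1 + (d : Rw) * w⁻¹) ^ t * f) := by
  obtain ⟨p, q, hq, rfl, rfl⟩ := hf
  refine ⟨(X + (d : ℚ[X])) ^ t * p, q, hq, by simp [mul_div_assoc], ?_⟩
  have hw : w ≠ 0 := RatFunc.X_ne_zero
  have hX : algebraMap ℚ[X] Rw X = w := RatFunc.algebraMap_X
  -- `(1 + d/w)ᵗ · wᵗ = (w + d)ᵗ`
  simp only [map_mul, map_pow, map_add, map_natCast, hX, pow_add]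
  field_simp
  rw [div_pow, div_mul_cancel₀ _ (pow_ne_zero _ hw)]
  ring

lemma ev0_eq (hf : HasLeadingTerm 0 c f) : ev0 f = c := by
  obtain ⟨p, q, hq, rfl, rfl⟩ := hf
  simp [ev0_algebraMap_div_s11 hq]

lemma ev0_eq_zero (hf : HasLeadingTerm (s + 1) c f) : ev0 f = 0 := by
  obtain ⟨p, q, hq, rfl, rfl⟩ := hf
  rw [ev0_algebraMap_div_s11 hq]
  simp

end HasLeadingTerm

lemma coeff_iterate_DD (s d : ℕ) (H : PowerSeries Rw) :
    PowerSeries.coeff d (DD^[s] H) = (1 + (d : Rw) * w⁻¹) ^ s * PowerSeries.coeff d H := by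
  induction s generalizing H with
  | zero => simp
  | succ s ih =>
    rw [Function.iterate_succ_apply, ih, DD, PowerSeries.coeff_mk, pow_succ, mul_assoc]

lemma ev0Series_eq_one {H : PowerSeries Rw} (h0 : ev0 (PowerSeries.coeff 0 H) = 1)
    (h : ∀ d, 0 < d → ev0 (PowerSeries.coeff d H) = 0) : ev0Series H = 1 := by
  ext d
  rw [ev0Series, PowerSeries.coeff_mk, PowerSeries.coeff_one]
  rcases Nat.eq_zero_or_pos d with rfl | hd
  · rw [h0, if_pos rfl, map_one]
  · simp [h d hd, hd.ne']

lemma MM_eq_DD {H : PowerSeries Rw} (h0 : ev0 (PowerSeries.coeff 0 H) = 1)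
    (h : ∀ d, 0 < d → ev0 (PowerSeries.coeff d H) = 0) : MM H = DD H := by
  rw [MM, ev0Series_eq_one h0 h, inv_one, mul_one]

lemma iterate_MM_eq_iterate_DD {H : PowerSeries Rw} {e : ℕ} (h0 : PowerSeries.coeff 0 H = 1)
    (hH : ∀ d, 0 < d → ∃ c, HasLeadingTerm e c (PowerSeries.coeff d H)) :
    MM^[e] H = DD^[e] H := by
  suffices ∀ s ≤ e, MM^[s] H = DD^[s] H from this e le_rfl
  intro s hs
  induction s with
  | zero => rfl
  | succ s ih =>
    rw [Function.iterate_succ_apply', Function.iterate_succ_apply', ih (by omega)]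
    refine MM_eq_DD (by simp [coeff_iterate_DD, h0, ev0]) fun d hd => ?_
    obtain ⟨c, hc⟩ := hH d hd
    rw [coeff_iterate_DD]
    rw [show e = s + (e - s - 1 + 1) by omega] at hc
    exact (hc.one_add_pow_mul d).ev0_eq_zero

open Finset

lemma hasLeadingTerm_mul_w_add (a b : ℚ) : HasLeadingTerm 0 b ((a : Rw) * w + (b : Rw)) := by
  convert HasLeadingTerm.of_polynomial 0 (C a * X + C b) using 1
  · simp
  · rw [pow_zero, one_mul, map_add, map_mul, RatFunc.algebraMap_X, RatFunc.algebraMap_C,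
      RatFunc.algebraMap_C]
    simp [w]

lemma hasLeadingTerm_mul_w (a : ℚ) : HasLeadingTerm 1 a ((a : Rw) * w) := by
  convert HasLeadingTerm.of_polynomial 1 (C a) using 1
  · simp
  · rw [pow_one, map_mul, RatFunc.algebraMap_X, RatFunc.algebraMap_C, mul_comm]
    simp [w]

lemma hasLeadingTerm_prod_mul_w_add_succ (a : ℤ) (m : ℕ) :
    HasLeadingTerm 0 m.factorial (∏ r ∈ range m, ((a : Rw) * w + ((r : Rw) + 1))) := by
  have h := HasLeadingTerm.prod (S := range m) (i := fun _ => 0) fun r _ =>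
    hasLeadingTerm_mul_w_add a (r + 1)
  push_cast at h
  simpa [← prod_range_add_one_eq_factorial] using h

lemma hasLeadingTerm_prod_mul_w_sub_succ (a : ℤ) (m : ℕ) :
    HasLeadingTerm 0 ((-1) ^ m * m.factorial)
      (∏ r ∈ range m, ((a : Rw) * w - ((r : Rw) + 1))) := by
  have h := HasLeadingTerm.prod (S := range m) (i := fun _ => 0) fun r _ =>
    hasLeadingTerm_mul_w_add a (-(r + 1))
  push_cast [← sub_eq_add_neg] at h
  rw [sum_const_zero, prod_neg, card_range] at h
  rw [← prod_range_add_one_eq_factorial]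
  push_cast
  exact h

lemma hasLeadingTerm_prod_mul_w_add (a : ℤ) (m : ℕ) :
    HasLeadingTerm 1 (m.factorial * a) (∏ r ∈ range (m + 1), ((a : Rw) * w + r)) := by
  rw [prod_range_succ']
  simpa using (hasLeadingTerm_prod_mul_w_add_succ a m).mul (hasLeadingTerm_mul_w a)

lemma hasLeadingTerm_prod_mul_w_sub (a : ℤ) (m : ℕ) :
    HasLeadingTerm 1 ((-1) ^ m * m.factorial * a) (∏ r ∈ range (m + 1), ((a : Rw) * w - r)) := by
  rw [prod_range_succ']
  simpa using (hasLeadingTerm_prod_mul_w_sub_succ a m).mul (hasLeadingTerm_mul_w a)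

def signedFactorial (a : ℤ) (d : ℕ) : ℚ :=
  if 0 < a then ((a.toNat * d).factorial : ℚ)
  else (-1 : ℚ) ^ (a.natAbs * d) * ((a.natAbs * d).factorial : ℚ)

def fdotFactor (a : ℤ) (d : ℕ) : Rw :=
  if 0 < a then ∏ r ∈ range (a.toNat * d), ((a : Rw) * w + ((r : Rw) + 1))
  else ∏ r ∈ range (a.natAbs * d), ((a : Rw) * w - (r : Rw))

def fddotFactor (a : ℤ) (d : ℕ) : Rw :=
  if 0 < a then ∏ r ∈ range (a.toNat * d), ((a : Rw) * w + (r : Rw))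
  else ∏ r ∈ range (a.natAbs * d), ((a : Rw) * w - ((r : Rw) + 1))

def hypergeomDenom (n d : ℕ) : Rw := ∏ r ∈ range d, ((w + ((r : Rw) + 1)) ^ n - w ^ n)

lemma coeff_Fdot (l n : ℕ) (a : Fin l → ℤ) (d : ℕ) :
    PowerSeries.coeff d (Fdot l n a) = (∏ k, fdotFactor (a k) d) / hypergeomDenom n d := by
  rw [Fdot, PowerSeries.coeff_mk]
  rfl

lemma coeff_Fddot (l n : ℕ) (a : Fin l → ℤ) (d : ℕ) :
    PowerSeries.coeff d (Fddot l n a) = (∏ k, fddotFactor (a k) d) / hypergeomDenom n d := by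
  rw [Fddot, PowerSeries.coeff_mk]
  rfl

lemma hasLeadingTerm_fdotFactor (a : ℤ) {d : ℕ} (hd : 0 < d) :
    HasLeadingTerm (if a < 0 then 1 else 0)
      (signedFactorial a d / d ^ (if a < 0 then 1 else 0)) (fdotFactor a d) := by
  rcases lt_trichotomy a 0 with ha | rfl | ha
  · obtain ⟨m, hm⟩ : ∃ m, a.natAbs * d = m + 1 :=
      ⟨a.natAbs * d - 1, by have := Nat.mul_pos (Int.natAbs_pos.mpr ha.ne) hd; omega⟩
    have had : (a : ℚ) * d = -(m + 1) := by
      have hm' : ((a.natAbs * d : ℕ) : ℤ) = m + 1 := by exact_mod_cast hm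
      push_cast [show (a.natAbs : ℤ) = -a by omega] at hm'
      exact_mod_cast (by linarith : a * d = -((m : ℤ) + 1))
    rw [fdotFactor, signedFactorial, if_neg ha.not_gt, if_neg ha.not_gt, if_pos ha, hm]
    convert hasLeadingTerm_prod_mul_w_sub a m using 1
    field_simp
    rw [Nat.factorial_succ, pow_succ]
    push_cast
    linear_combination -(-1) ^ m * (m.factorial : ℚ) * had
  · simp [fdotFactor, signedFactorial, HasLeadingTerm.one]
  · simpa [fdotFactor, signedFactorial, ha, ha.not_gt] using
      hasLeadingTerm_prod_mul_w_add_succ a (a.toNat * d)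

lemma hasLeadingTerm_fddotFactor (a : ℤ) {d : ℕ} (hd : 0 < d) :
    HasLeadingTerm (if 0 < a then 1 else 0)
      (signedFactorial a d / d ^ (if 0 < a then 1 else 0)) (fddotFactor a d) := by
  by_cases ha : 0 < a
  · obtain ⟨m, hm⟩ : ∃ m, a.toNat * d = m + 1 :=
      ⟨a.toNat * d - 1, by have := Nat.mul_pos (Int.lt_toNat.mpr ha) hd; omega⟩
    have had : (a : ℚ) * d = m + 1 := by
      have hm' : ((a.toNat * d : ℕ) : ℤ) = m + 1 := by exact_mod_cast hm
      push_cast [Int.toNat_of_nonneg ha.le] at hm'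
      exact_mod_cast hm'
    rw [fddotFactor, signedFactorial, if_pos ha, if_pos ha, if_pos ha, hm]
    convert hasLeadingTerm_prod_mul_w_add a m using 1
    field_simp
    rw [Nat.factorial_succ]
    push_cast
    linear_combination -(m.factorial : ℚ) * had
  · simpa [fddotFactor, signedFactorial, ha] using
      hasLeadingTerm_prod_mul_w_sub_succ a (a.natAbs * d)

lemma hasLeadingTerm_hypergeomDenom {n : ℕ} (hn : 1 ≤ n) (d : ℕ) :
    HasLeadingTerm 0 ((d.factorial : ℚ) ^ n) (hypergeomDenom n d) := by
  have h := HasLeadingTerm.prod (S := range d) (i := fun _ => 0) fun r _ =>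
    HasLeadingTerm.of_polynomial 0 ((X + C ((r : ℚ) + 1)) ^ n - X ^ n)
  simp only [sum_const_zero, pow_zero, one_mul, map_sub, map_pow, map_add,
    RatFunc.algebraMap_X, RatFunc.algebraMap_C] at h
  rw [← prod_range_add_one_eq_factorial]
  push_cast
  convert h using 1
  · simp [zero_pow (by omega : n ≠ 0), prod_pow]
  · simp [hypergeomDenom, w]

lemma hasLeadingTerm_prod_div_hypergeomDenom {ι : Type*} [Fintype ι] {n d : ℕ} (hn : 1 ≤ n)
    {f : ι → Rw} {i : ι → ℕ} {F : ι → ℚ}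
    (h : ∀ k, HasLeadingTerm (i k) (F k / d ^ i k) (f k)) :
    HasLeadingTerm (∑ k, i k) ((∏ k, F k) / (d.factorial : ℚ) ^ n / d ^ (∑ k, i k))
      ((∏ k, f k) / hypergeomDenom n d) := by
  have h' := (HasLeadingTerm.prod (S := univ) fun k _ => h k).mul
    ((hasLeadingTerm_hypergeomDenom hn d).inv (by positivity))
  rw [add_zero, ← div_eq_mul_inv, ← div_eq_mul_inv] at h'
  convert h' using 1
  rw [prod_div_distrib, prod_pow_eq_pow_sum]
  ring

lemma hasLeadingTerm_coeff_Fdot {l n : ℕ} (hn : 1 ≤ n) (a : Fin l → ℤ) {d : ℕ} (hd : 0 < d) :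
    HasLeadingTerm (ellMinus l a)
      ((∏ k, signedFactorial (a k) d) / (d.factorial : ℚ) ^ n / d ^ ellMinus l a)
      (PowerSeries.coeff d (Fdot l n a)) := by
  have h := hasLeadingTerm_prod_div_hypergeomDenom hn fun k => hasLeadingTerm_fdotFactor (a k) hd
  rw [← card_filter] at h
  rwa [coeff_Fdot]

lemma hasLeadingTerm_coeff_Fddot {l n : ℕ} (hn : 1 ≤ n) (a : Fin l → ℤ) {d : ℕ} (hd : 0 < d) :
    HasLeadingTerm (ellPlus l a)
      ((∏ k, signedFactorial (a k) d) / (d.factorial : ℚ) ^ n / d ^ ellPlus l a)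
      (PowerSeries.coeff d (Fddot l n a)) := by
  have h := hasLeadingTerm_prod_div_hypergeomDenom hn fun k => hasLeadingTerm_fddotFactor (a k) hd
  rw [← card_filter] at h
  rwa [coeff_Fddot]

lemma mk_ev0_coeff_iterate_MM {H : PowerSeries Rw} {e : ℕ} {T : ℕ → ℚ}
    (h0 : PowerSeries.coeff 0 H = 1) (hT0 : T 0 = 1)
    (hH : ∀ d, 0 < d → HasLeadingTerm e (T d / d ^ e) (PowerSeries.coeff d H)) :
    PowerSeries.mk (fun d => ev0 (PowerSeries.coeff d (MM^[e] H))) = PowerSeries.mk T := by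
  rw [iterate_MM_eq_iterate_DD h0 fun d hd => ⟨_, hH d hd⟩]
  ext d
  rw [PowerSeries.coeff_mk, PowerSeries.coeff_mk, coeff_iterate_DD]
  rcases Nat.eq_zero_or_pos d with rfl | hd
  · simp [h0, hT0, ev0]
  · rw [((hH d hd).one_add_pow_mul (s := 0) d).ev0_eq]
    field_simp

theorem statement11_general (l n : ℕ) (hn : 1 ≤ n) (a : Fin l → ℤ) :
    Idot l n a (ellMinus l a)
        = PowerSeries.mk (fun d =>
            (∏ k : Fin l,
                if 0 < a k then (((a k).toNat * d).factorial : ℚ)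
                else (-1 : ℚ) ^ ((a k).natAbs * d) * (((a k).natAbs * d).factorial : ℚ))
              / ((d.factorial : ℚ)) ^ n) ∧
    Iddot l n a (ellPlus l a)
        = PowerSeries.mk (fun d =>
            (∏ k : Fin l,
                if 0 < a k then (((a k).toNat * d).factorial : ℚ)
                else (-1 : ℚ) ^ ((a k).natAbs * d) * (((a k).natAbs * d).factorial : ℚ))
              / ((d.factorial : ℚ)) ^ n) :=
  ⟨mk_ev0_coeff_iterate_MM (by simp [Fdot]) (by simp)
      fun _ hd => hasLeadingTerm_coeff_Fdot hn a hd,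
    mk_ev0_coeff_iterate_MM (by simp [Fddot]) (by simp)
      fun _ hd => hasLeadingTerm_coeff_Fddot hn a hd⟩

/-- `İ_{ℓ⁻(a)}(q) = Ï_{ℓ⁺(a)}(q)
  = ∑_d q^d [∏_{a_k>0}(a_k d)! ∏_{a_k<0}((−1)^{|a_k|d}(|a_k|d)!)]/(d!)^n` in `ℚ[[q]]`. -/
theorem statement11 (l n : ℕ) (hn : 1 ≤ n) (a : Fin l → ℤ) (ha : ∀ k, a k ≠ 0)
    (hCY : ∑ k : Fin l, (a k).natAbs = n) :
    Idot l n a (ellMinus l a)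
        = PowerSeries.mk (fun d =>
            (∏ k : Fin l,
                if 0 < a k then (((a k).toNat * d).factorial : ℚ)
                else (-1 : ℚ) ^ ((a k).natAbs * d) * (((a k).natAbs * d).factorial : ℚ))
              / ((d.factorial : ℚ)) ^ n) ∧
    Iddot l n a (ellPlus l a)
        = PowerSeries.mk (fun d =>
            (∏ k : Fin l,
                if 0 < a k then (((a k).toNat * d).factorial : ℚ)
                else (-1 : ℚ) ^ ((a k).natAbs * d) * (((a k).natAbs * d).factorial : ℚ))
              / ((d.factorial : ℚ)) ^ n) :=
  statement11_general l n hn a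

end SQ
end
end
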